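/- arXiv:1512.05744 — 5 statements merged into one kernel-verified Lean document; each statement's English description precedes it below -/
import Mathlib

section
/- For any l ≥ 0, if binomial(D+l-1, l) < p ≤ binomial(D+l, l+1) and 0 ≤ d < p(l+1) - binomial(D+l, l), then Θ^p_d = 0; i.e., there exist no p pairwise distinct multi-indices S_1, ..., S_p in ℤ_{≥0}^{D-1} with |S_1| + ... + |S_p| = d. -/
/-!
A multi-index `S` is counted `l + 1 - |S|` times in `∑_{j ≤ l} #{S ∈ A | |S| ≤ j}`, and by stars
and bars at most `C(k + j, j)` multi-indices in `ℕ^k` have length `≤ j`. By the hockey-stick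
identity, `∑_{S ∈ A} (l + 1 - |S|) ≤ C(k + l + 1, l)`, so any `p` distinct multi-indices satisfy
`p (l + 1) ≤ ∑_{S ∈ A} |S| + C(k + l + 1, l)`; with `k = D - 1` this is incompatible with
`d < p (l + 1) - C(D + l, l)`.
-/

open Finset

theorem card_le_choose_of_forall_sum_le {k m : ℕ} (B : Finset (Fin k → ℕ))
    (hB : ∀ S ∈ B, ∑ i, S i ≤ m) : #B ≤ (k + m).choose m := by
  -- Append the slack `m - |S|` as a last coordinate to land in the tuples of sum exactly `m`.
  let slack (S : Fin k → ℕ) : Fin (k + 1) →₀ ℕ :=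
    Finsupp.equivFunOnFinite.symm (Fin.snoc S (m - ∑ i, S i))
  have hmaps : ∀ S ∈ B, slack S ∈ (univ : Finset (Fin (k + 1))).finsuppAntidiag m := by
    intro S hS
    have := hB S hS
    simp only [slack, mem_finsuppAntidiag, Fin.sum_univ_castSucc,
      Finsupp.coe_equivFunOnFinite_symm, Fin.snoc_castSucc, Fin.snoc_last, subset_univ, and_true]
    omega
  have hinj : Set.InjOn slack B := fun S _ T _ h => by
    funext i
    simpa [slack] using congr($h (Fin.castSucc i))
  calc #B ≤ #((univ : Finset (Fin (k + 1))).finsuppAntidiag m) :=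
        card_le_card_of_injOn slack hmaps hinj
    _ = (k + m).choose m := by
        rw [card_finsuppAntidiag_nat_eq_choose, card_univ, Fintype.card_fin, Nat.add_right_comm,
          Nat.add_sub_cancel]

theorem sum_tsub_eq_sum_card_filter_le {α : Type*} (A : Finset α) (f : α → ℕ) (n : ℕ) :
    ∑ a ∈ A, (n - f a) = ∑ j ∈ range n, #{a ∈ A | f a ≤ j} := by
  have hslice (c : ℕ) : n - c = ∑ j ∈ range n, if c ≤ j then 1 else 0 := by
    rw [← card_filter, range_eq_Ico, Ico_filter_le_of_left_le c.zero_le, Nat.card_Ico]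
  simp only [hslice, card_filter]
  exact sum_comm

theorem sum_tsub_sum_le_choose {k : ℕ} (A : Finset (Fin k → ℕ)) (l : ℕ) :
    ∑ S ∈ A, (l + 1 - ∑ i, S i) ≤ (k + l + 1).choose l :=
  calc ∑ S ∈ A, (l + 1 - ∑ i, S i)
      = ∑ j ∈ range (l + 1), #{S ∈ A | ∑ i, S i ≤ j} :=
        sum_tsub_eq_sum_card_filter_le _ _ _
    _ ≤ ∑ j ∈ range (l + 1), (j + k).choose k := by
        gcongr with j
        rw [← Nat.choose_symm_add, add_comm]
        exact card_le_choose_of_forall_sum_le _ fun S hS => (mem_filter.1 hS).2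
    _ = (k + l + 1).choose l := by
        rw [Nat.sum_range_add_choose, add_comm l k]
        exact Nat.choose_symm_of_eq_add (by omega)

theorem card_mul_le_sum_sum_add_choose {k : ℕ} (A : Finset (Fin k → ℕ)) (l : ℕ) :
    #A * (l + 1) ≤ ∑ S ∈ A, ∑ i, S i + (k + l + 1).choose l :=
  calc #A * (l + 1) = ∑ _S ∈ A, (l + 1) := by rw [sum_const, smul_eq_mul]
    _ ≤ ∑ S ∈ A, (∑ i, S i + (l + 1 - ∑ i, S i)) := sum_le_sum fun _ _ => le_add_tsub
    _ = ∑ S ∈ A, ∑ i, S i + ∑ S ∈ A, (l + 1 - ∑ i, S i) := sum_add_distrib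
    _ ≤ ∑ S ∈ A, ∑ i, S i + (k + l + 1).choose l := by
        gcongr
        exact sum_tsub_sum_le_choose A l

theorem stmt4_general (D l p d : ℕ) (hD : 2 ≤ D)
    (h3 : d < p * (l + 1) - Nat.choose (D + l) l) :
    {A : Finset (Fin (D - 1) → ℕ) | A.card = p ∧ (∑ S ∈ A, ∑ i, S i) = d} = ∅ := by
  refine Set.eq_empty_of_forall_notMem fun A ⟨hcard, hsum⟩ => ?_
  have hbound := card_mul_le_sum_sum_add_choose A l
  rw [hcard, hsum, show D - 1 + l + 1 = D + l by omega] at hbound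
  omega

/-- for any `l ≥ 0`, if `C(D+l-1, l) < p ≤ C(D+l, l+1)` and
`d < p(l+1) - C(D+l, l)`, then there exist no `p` pairwise distinct multi-indices
`S_1, …, S_p ∈ ℤ_{≥0}^{D-1}` with `|S_1| + ⋯ + |S_p| = d`; i.e. `Θ^p_d = 0`. -/
theorem stmt4 (D l p d : ℕ) (hD : 2 ≤ D)
    (h1 : Nat.choose (D + l - 1) l < p) (h2 : p ≤ Nat.choose (D + l) (l + 1))
    (h3 : d < p * (l + 1) - Nat.choose (D + l) l) :
    {A : Finset (Fin (D - 1) → ℕ) | A.card = p ∧ (∑ S ∈ A, ∑ i, S i) = d} = ∅ :=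
  stmt4_general D l p d hD h3
end

section
/- For D = 2, dim H^3_d(2) satisfies: it is 0 for d < 3; k for d = 4 + 6k; and k+1 for d = 3 + 6k and for 5 + 6k ≤ d ≤ 8 + 6k (k ≥ 0). Equivalently, P(d − 3 + 3, 3) − P(d − 1 − 3 + 3, 3) = P(d, 3) − P(d − 1, 3) takes these values. -/
noncomputable section

abbrev Idx (D : ℕ) : Type := Fin (D - 1) → ℕ

abbrev Th (D : ℕ) : Type := ExteriorAlgebra ℝ (Idx D →₀ ℝ)

def theta (D : ℕ) (S : Idx D) : Th D := ExteriorAlgebra.ι ℝ (Finsupp.single S (1:ℝ))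

def degIdx (D : ℕ) (S : Idx D) : ℕ := ∑ i, S i

def wedge (D : ℕ) {p : ℕ} (l : Fin p → Idx D) : Th D :=
  (List.ofFn fun j => theta D (l j)).prod

/-- The bidegree `(p,d)` component `Θ^p_d`. -/
def ThetaPD (D p d : ℕ) : Submodule ℝ (Th D) :=
  Submodule.span ℝ {x | ∃ l : Fin p → Idx D, (∑ j, degIdx D (l j)) = d ∧ x = wedge D l}

/-- The image `∂_{x^i} Θ^p_{d-1} ⊆ Θ^p_d`. -/
def DImg (D : ℕ) (i : Fin (D - 1)) (p d : ℕ) : Submodule ℝ (Th D) :=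
  Submodule.span ℝ {x | ∃ l : Fin p → Idx D, (∑ j, degIdx D (l j)) + 1 = d ∧
    x = ∑ j, wedge D (Function.update l j (l j + Pi.single i 1))}

/-- The dimension of `H^p_d(D) = Θ^p_d / (∂_{x^1}Θ^p_{d-1} + ⋯ + ∂_{x^{D-1}}Θ^p_{d-1})`. -/
def dimHpd (D p d : ℕ) : ℕ :=
  Module.finrank ℝ
    (↥(ThetaPD D p d) ⧸ Submodule.comap (ThetaPD D p d).subtype (⨆ i : Fin (D - 1), DImg D i p d))

/-- Number of partitions of `n` into exactly `k` positive parts. -/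
def Ppart (n k : ℕ) : ℕ := Set.ncard {π : Nat.Partition n | π.parts.card = k}

end

/-!
For `D = 2` the generators `θ^{(n)}`, `n ∈ ℕ`, form a basis, so `Θ³_d` has the basis
`θ^{(a)} θ^{(b)} θ^{(c)}` with `a < b < c`, `a + b + c = d`; there are `P(d, 3)` such triples
(via `(a, b, c) ↦ (a + 1, b, c - 1)`). The operator `∂_{x^1}` is the derivation extending
`θ^{(n)} ↦ θ^{(n+1)}`, so `∂_{x^1} Θ³_{d-1}` is spanned by the images of the basis of `Θ³_{d-1}`.
These images are linearly independent: `∂ (θ^{(a)} θ^{(b)} θ^{(c)})` contains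
`θ^{(a)} θ^{(b)} θ^{(c+1)}`, which occurs in no image of a triple with largest entry `≤ c`.
Hence `dim H³_d(2) = P(d, 3) - P(d - 1, 3)`, and the values follow from
`P(d, 3) = ⌊(d² + 6) / 12⌋`, a consequence of `P(d + 3, 3) = P(d, 3) + ⌊(d + 2) / 2⌋`.
-/

open Function

theorem LinearIndependent.of_dual_triangular {ι κ R M : Type*} [Ring R] [AddCommGroup M]
    [Module R M] [LinearOrder κ] (v : ι → M) (f : ι → Module.Dual R M) (r : ι → κ)
    (hlower : ∀ i j, i ≠ j → r j ≤ r i → f i (v j) = 0) (hdiag : ∀ i, f i (v i) = 1) :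
    LinearIndependent R v := by
  classical
  rw [linearIndependent_iff]
  intro l hl
  by_contra hne
  obtain ⟨i, hi, hmax⟩ := l.support.exists_max_image r (Finsupp.support_nonempty_iff.mpr hne)
  have hfi : f i (Finsupp.linearCombination R v l) = l i := by
    rw [Finsupp.linearCombination_apply, Finsupp.sum, map_sum, Finset.sum_eq_single i]
    · simp [hdiag]
    · intro j hj hji
      simp [hlower i j (Ne.symm hji) (hmax j hj)]
    · intro h; exact absurd hi h
  rw [hl, map_zero] at hfi
  exact (Finsupp.mem_support_iff.mp hi) hfi.symm

theorem AlternatingMap.eq_zero_or_exists_strictMono {R M N I : Type*} [CommRing R]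
    [AddCommGroup M] [Module R M] [AddCommGroup N] [Module R N] [LinearOrder I] {n : ℕ}
    (g : M [⋀^Fin n]→ₗ[R] N) (v : I → M) (α : Fin n → I) :
    g (v ∘ α) = 0 ∨ ∃ σ : Equiv.Perm (Fin n),
      StrictMono (α ∘ σ) ∧ g (v ∘ α) = Equiv.Perm.sign σ • g (v ∘ (α ∘ σ)) := by
  by_cases hα : Injective α
  · refine Or.inr ⟨Tuple.sort α, (Tuple.monotone_sort α).strictMono_of_injective
      (hα.comp (Equiv.injective _)), ?_⟩
    rw [← comp_assoc, g.map_perm, smul_smul, Int.units_mul_self, one_smul]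
  · exact Or.inl (g.map_eq_zero_of_not_injective _ fun h => hα h.of_comp)

theorem Submodule.finrank_quotient_comap_subtype_of_le {K V : Type*} [DivisionRing K]
    [AddCommGroup V] [Module K V] {N P : Submodule K V} [FiniteDimensional K P] (h : N ≤ P) :
    Module.finrank K (P ⧸ N.comap P.subtype) = Module.finrank K P - Module.finrank K N := by
  rw [← Submodule.finrank_quotient_add_finrank (N.comap P.subtype),
    (Submodule.comapSubtypeEquivOfLe h).finrank_eq, Nat.add_sub_cancel]

namespace ExteriorAlgebra

variable {R M : Type*} [CommRing R] [AddCommGroup M] [Module R M]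

theorem ιMulti_compLinearMap_update_apply {n : ℕ} (S : M →ₗ[R] M) (j : Fin n) (v : Fin n → M) :
    (ιMulti R n).toMultilinearMap.compLinearMap (update (fun _ => LinearMap.id) j S) v =
      ιMulti R n (update v j (S (v j))) := by
  rw [MultilinearMap.compLinearMap_apply]
  refine congrArg (ιMulti R n) (funext fun i => ?_)
  rcases eq_or_ne i j with rfl | hij <;> simp [update_of_ne, *]

noncomputable def inducedDerivationAlternating (S : M →ₗ[R] M) (n : ℕ) :
    M [⋀^Fin n]→ₗ[R] ExteriorAlgebra R M where
  toMultilinearMap := ∑ j, (ιMulti R n).toMultilinearMap.compLinearMap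
    (update (fun _ => LinearMap.id) j S)
  map_eq_zero_of_eq' v i k hv hik := by
    classical
    rw [MultilinearMap.toFun_eq_coe, sum_apply]
    simp only [ιMulti_compLinearMap_update_apply]
    -- Only the terms differentiating slot `i` or `k` survive, and they differ by swapping `i, k`.
    rw [Fintype.sum_eq_add i k hik fun j hj => (ιMulti R n).map_eq_zero_of_eq _
      (by simp [update_of_ne hj.1.symm, update_of_ne hj.2.symm, hv]) hik]
    have hswap : update v k (S (v k)) = update v i (S (v i)) ∘ Equiv.swap i k := by
      funext j
      rcases eq_or_ne j i with rfl | hji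
      · simp [hv, update_of_ne hik, update_of_ne hik.symm]
      rcases eq_or_ne j k with rfl | hjk
      · simp [hv]
      · simp [Equiv.swap_apply_of_ne_of_ne hji hjk, update_of_ne hji, update_of_ne hjk]
    rw [hswap, add_comm]
    exact (ιMulti R n).map_swap_add _ hik

noncomputable def inducedDerivation (S : M →ₗ[R] M) :
    ExteriorAlgebra R M →ₗ[R] ExteriorAlgebra R M :=
  liftAlternating (inducedDerivationAlternating S)

theorem inducedDerivation_ιMulti (S : M →ₗ[R] M) {n : ℕ} (v : Fin n → M) :
    inducedDerivation S (ιMulti R n v) = ∑ j, ιMulti R n (update v j (S (v j))) := by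
  rw [inducedDerivation, liftAlternating_apply_ιMulti]
  exact (sum_apply _ _ _).trans
    (Finset.sum_congr rfl fun j _ => ιMulti_compLinearMap_update_apply S j v)

variable {I : Type*} [LinearOrder I] {n : ℕ}

noncomputable def coordOfStrictMono (b : Module.Basis I R M) {α : Fin n → I}
    (hα : StrictMono α) : Module.Dual R (ExteriorAlgebra R M) :=
  liftAlternating <| Pi.single n <|
    (exteriorPower.ιMultiDual R n b
      (Set.powersetCard.ofFinEmbEquiv (OrderEmbedding.ofStrictMono α hα))).compAlternatingMap
      (exteriorPower.ιMulti R n)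

theorem coordOfStrictMono_ιMulti (b : Module.Basis I R M) {α β : Fin n → I} (hα : StrictMono α)
    (hβ : StrictMono β) :
    coordOfStrictMono b hα (ιMulti R n (b ∘ β)) = if β = α then 1 else 0 := by
  have hβfam : exteriorPower.ιMulti R n (b ∘ β) = exteriorPower.ιMulti_family R n b
      (Set.powersetCard.ofFinEmbEquiv (OrderEmbedding.ofStrictMono β hβ)) := by
    simp [exteriorPower.ιMulti_family]
  rw [coordOfStrictMono, liftAlternating_apply_ιMulti, Pi.single_eq_same,
    LinearMap.compAlternatingMap_apply, hβfam]
  split_ifs with h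
  · subst h
    exact exteriorPower.ιMultiDual_apply_diag R n b _
  · refine exteriorPower.ιMultiDual_apply_nondiag R n b _ _ fun hs => h ?_
    have := congrArg DFunLike.coe (Set.powersetCard.ofFinEmbEquiv.injective hs)
    simpa using this.symm

end ExteriorAlgebra

open ExteriorAlgebra

section General

variable {D p d : ℕ}

theorem wedge_eq_ιMulti (l : Fin p → Idx D) :
    wedge D l = ιMulti ℝ p (fun j => Finsupp.single (l j) 1) := by
  rw [ιMulti_apply]
  rfl

/-- `∂_{x^i} θ_S = θ_{S + eᵢ}` on generators; `inducedDerivation (shiftIdx D i)` is `∂_{x^i}`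
on all of `Θ`. -/
noncomputable def shiftIdx (D : ℕ) (i : Fin (D - 1)) : (Idx D →₀ ℝ) →ₗ[ℝ] (Idx D →₀ ℝ) :=
  Finsupp.lmapDomain ℝ ℝ (· + Pi.single i 1)

theorem degIdx_add_single (S : Idx D) (i : Fin (D - 1)) :
    degIdx D (S + Pi.single i 1) = degIdx D S + 1 := by
  simp [degIdx, Finset.sum_add_distrib]

theorem sum_wedge_update_eq_inducedDerivation (i : Fin (D - 1)) (l : Fin p → Idx D) :
    ∑ j, wedge D (update l j (l j + Pi.single i 1)) =
      inducedDerivation (shiftIdx D i) (wedge D l) := by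
  simp only [wedge_eq_ιMulti, inducedDerivation_ιMulti]
  refine Finset.sum_congr rfl fun j _ => congrArg (ιMulti ℝ p) (funext fun m => ?_)
  rcases eq_or_ne m j with rfl | hmj
  · simp [shiftIdx]
  · simp [update_of_ne hmj]

theorem sum_degIdx_update (i : Fin (D - 1)) (l : Fin p → Idx D) (j : Fin p) :
    ∑ m, degIdx D (update l j (l j + Pi.single i 1) m) = ∑ m, degIdx D (l m) + 1 := by
  have h : ∀ m, degIdx D (update l j (l j + Pi.single i 1) m) =
      degIdx D (l m) + if m = j then 1 else 0 := fun m => by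
    rcases eq_or_ne m j with rfl | hmj
    · simp [degIdx_add_single]
    · simp [hmj]
  simp [h, Finset.sum_add_distrib]

theorem DImg_le_ThetaPD (i : Fin (D - 1)) : DImg D i p d ≤ ThetaPD D p d := by
  rw [DImg, Submodule.span_le]
  rintro _ ⟨l, hl, rfl⟩
  refine Submodule.sum_mem _ fun j _ => Submodule.subset_span ⟨_, ?_, rfl⟩
  rw [sum_degIdx_update, hl]

theorem DImg_le_map_ThetaPD (i : Fin (D - 1)) :
    DImg D i p d ≤ (ThetaPD D p (d - 1)).map (inducedDerivation (shiftIdx D i)) := by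
  rw [DImg, Submodule.span_le]
  rintro _ ⟨l, hl, rfl⟩
  rw [sum_wedge_update_eq_inducedDerivation]
  exact Submodule.mem_map_of_mem (Submodule.subset_span ⟨l, by omega, rfl⟩)

end General

section TwoThree

open Finset

def idxEquiv : ℕ ≃ Idx 2 := (Equiv.funUnique (Fin 1) ℕ).symm

noncomputable def thetaBasis : Module.Basis ℕ ℝ (Idx 2 →₀ ℝ) :=
  Finsupp.basisSingleOne.reindex idxEquiv.symm

theorem thetaBasis_apply (n : ℕ) : thetaBasis n = Finsupp.single (idxEquiv n) 1 := by
  simp [thetaBasis]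

theorem degIdx_two (S : Idx 2) : degIdx 2 S = idxEquiv.symm S := by
  simp [degIdx, idxEquiv]

theorem shiftIdx_thetaBasis (n : ℕ) : shiftIdx 2 0 (thetaBasis n) = thetaBasis (n + 1) := by
  simp only [thetaBasis_apply, shiftIdx, Finsupp.lmapDomain_apply, Finsupp.mapDomain_single]
  congr 1
  funext i
  simp [idxEquiv, Fin.fin_one_eq_zero i]

theorem wedge_two {p : ℕ} (l : Fin p → Idx 2) :
    wedge 2 l = ιMulti ℝ p (thetaBasis ∘ idxEquiv.symm ∘ l) := by
  simp [wedge_eq_ιMulti, Function.comp_def, thetaBasis_apply]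

def triples (d : ℕ) : Finset (ℕ × ℕ × ℕ) :=
  (range (d + 1) ×ˢ range (d + 1) ×ˢ range (d + 1)).filter
    fun t => t.1 < t.2.1 ∧ t.2.1 < t.2.2 ∧ t.1 + t.2.1 + t.2.2 = d

theorem mem_triples {d : ℕ} {t : ℕ × ℕ × ℕ} :
    t ∈ triples d ↔ t.1 < t.2.1 ∧ t.2.1 < t.2.2 ∧ t.1 + t.2.1 + t.2.2 = d := by
  simp only [triples, mem_filter, mem_product, mem_range]
  omega

def tripleVec (t : ℕ × ℕ × ℕ) : Fin 3 → ℕ := ![t.1, t.2.1, t.2.2]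

theorem tripleVec_injective : Function.Injective tripleVec := fun s t h => by
  have h0 := congrFun h 0
  have h1 := congrFun h 1
  have h2 := congrFun h 2
  simp only [tripleVec, Matrix.cons_val] at h0 h1 h2
  exact Prod.ext h0 (Prod.ext h1 h2)

theorem strictMono_tripleVec {t : ℕ × ℕ × ℕ} (h₁ : t.1 < t.2.1) (h₂ : t.2.1 < t.2.2) :
    StrictMono (tripleVec t) := by
  rw [Fin.strictMono_iff_lt_succ]
  intro i
  fin_cases i <;> simpa [tripleVec]

noncomputable def wedgeTriple (t : ℕ × ℕ × ℕ) : Th 2 := ιMulti ℝ 3 (thetaBasis ∘ tripleVec t)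

theorem inducedDerivation_wedgeTriple (a b c : ℕ) :
    inducedDerivation (shiftIdx 2 0) (wedgeTriple (a, b, c)) =
      wedgeTriple (a + 1, b, c) + wedgeTriple (a, b + 1, c) + wedgeTriple (a, b, c + 1) := by
  simp only [wedgeTriple, inducedDerivation_ιMulti, Fin.sum_univ_three, Function.comp_apply,
    shiftIdx_thetaBasis, ← Function.comp_update]
  congr 3 <;> funext i <;> fin_cases i <;> rfl

theorem coord_wedgeTriple {s t : ℕ × ℕ × ℕ} (ht₁ : t.1 < t.2.1) (ht₂ : t.2.1 < t.2.2)
    (hs₁ : s.1 ≤ s.2.1) (hs₂ : s.2.1 ≤ s.2.2) :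
    coordOfStrictMono thetaBasis (strictMono_tripleVec ht₁ ht₂) (wedgeTriple s) =
      if s = t then 1 else 0 := by
  by_cases hs : s.1 < s.2.1 ∧ s.2.1 < s.2.2
  · rw [wedgeTriple, coordOfStrictMono_ιMulti _ _ (strictMono_tripleVec hs.1 hs.2)]
    simp only [tripleVec_injective.eq_iff]
  · have hst : s ≠ t := by rintro rfl; exact hs ⟨ht₁, ht₂⟩
    have hzero : wedgeTriple s = 0 := by
      obtain h | h : s.1 = s.2.1 ∨ s.2.1 = s.2.2 := by omega
      · exact (ιMulti ℝ 3).map_eq_zero_of_eq (i := 0) (j := 1) _ (by simp [tripleVec, h])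
          (by decide)
      · exact (ιMulti ℝ 3).map_eq_zero_of_eq (i := 1) (j := 2) _ (by simp [tripleVec, h])
          (by decide)
    rw [hzero, map_zero, if_neg hst]

theorem sum_degIdx_idxEquiv_tripleVec (t : ℕ × ℕ × ℕ) :
    ∑ j, degIdx 2 ((idxEquiv ∘ tripleVec t) j) = t.1 + t.2.1 + t.2.2 := by
  simp [degIdx_two, Fin.sum_univ_three, tripleVec]

theorem wedge_idxEquiv_tripleVec (t : ℕ × ℕ × ℕ) :
    wedge 2 (idxEquiv ∘ tripleVec t) = wedgeTriple t := by
  simp [wedge_two, wedgeTriple, Function.comp_def]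

theorem ThetaPD_two_three_eq_span (d : ℕ) :
    ThetaPD 2 3 d = Submodule.span ℝ (Set.range fun t : triples d => wedgeTriple t) := by
  apply le_antisymm
  · rw [ThetaPD, Submodule.span_le]
    rintro _ ⟨l, hl, rfl⟩
    rw [wedge_two]
    rcases (ιMulti ℝ 3).eq_zero_or_exists_strictMono thetaBasis (idxEquiv.symm ∘ l) with
      h | ⟨σ, hσ, h⟩
    · rw [h]; exact zero_mem _
    set α := idxEquiv.symm ∘ l ∘ σ
    have hα : tripleVec (α 0, α 1, α 2) = α := by funext i; fin_cases i <;> rfl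
    have hsum : α 0 + α 1 + α 2 = d := by
      rw [← Fin.sum_univ_three, ← hl]
      simpa [α, degIdx_two] using Equiv.sum_comp σ (fun j => idxEquiv.symm (l j))
    have hmem : (α 0, α 1, α 2) ∈ triples d :=
      mem_triples.2 ⟨hσ (by decide), hσ (by decide), hsum⟩
    rw [h]
    refine Submodule.smul_of_tower_mem _ _ (Submodule.subset_span ⟨⟨_, hmem⟩, ?_⟩)
    show wedgeTriple (α 0, α 1, α 2) = _
    rw [wedgeTriple, hα]
    rfl
  · rw [Submodule.span_le]
    rintro _ ⟨⟨t, ht⟩, rfl⟩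
    rw [mem_triples] at ht
    refine Submodule.subset_span ⟨idxEquiv ∘ tripleVec t, ?_, (wedge_idxEquiv_tripleVec t).symm⟩
    rw [sum_degIdx_idxEquiv_tripleVec, ht.2.2]

theorem linearIndependent_wedgeTriple (d : ℕ) :
    LinearIndependent ℝ (fun t : triples d => wedgeTriple t) := by
  have ht (t : triples d) := mem_triples.1 t.2
  refine LinearIndependent.of_pairwise_dual_eq_zero_one _
    (fun t => coordOfStrictMono thetaBasis (strictMono_tripleVec (ht t).1 (ht t).2.1)) ?_ ?_
  · intro t s hts
    rw [coord_wedgeTriple (ht t).1 (ht t).2.1 (ht s).1.le (ht s).2.1.le,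
      if_neg (fun h => hts (Subtype.ext h).symm)]
  · intro t
    rw [coord_wedgeTriple (ht t).1 (ht t).2.1 (ht t).1.le (ht t).2.1.le, if_pos rfl]

theorem coord_inducedDerivation_wedgeTriple {a b c x y z : ℕ} (hab : a < b) (hbc : b < c + 1)
    (hxy : x < y) (hyz : y < z) (hzc : z ≤ c) :
    coordOfStrictMono thetaBasis (strictMono_tripleVec (t := (a, b, c + 1)) hab hbc)
      (inducedDerivation (shiftIdx 2 0) (wedgeTriple (x, y, z))) =
      if (x, y, z) = (a, b, c) then 1 else 0 := by
  rw [inducedDerivation_wedgeTriple, map_add, map_add,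
    coord_wedgeTriple hab hbc (show x + 1 ≤ y from hxy) hyz.le,
    coord_wedgeTriple hab hbc (show x ≤ y + 1 by omega) (show y + 1 ≤ z from hyz),
    coord_wedgeTriple hab hbc hxy.le (show y ≤ z + 1 by omega)]
  simp only [Prod.mk.injEq]
  split_ifs <;> norm_num <;> omega

/-- Pairing `∂ θ_{(a,b,c)}` with the coordinate at `(a, b, c + 1)` is triangular with respect to
the largest entry `c`. -/
theorem linearIndependent_inducedDerivation_wedgeTriple (d : ℕ) :
    LinearIndependent ℝ
      (fun t : triples d => inducedDerivation (shiftIdx 2 0) (wedgeTriple t)) := by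
  have ht (t : triples d) := mem_triples.1 t.2
  refine LinearIndependent.of_dual_triangular _
    (fun t => coordOfStrictMono thetaBasis
      (strictMono_tripleVec (t := (t.1.1, t.1.2.1, t.1.2.2 + 1)) (ht t).1
        (Nat.lt_succ_of_lt (ht t).2.1)))
    (fun t => t.1.2.2) ?_ ?_
  · rintro t ⟨⟨x, y, z⟩, hxyz⟩ hne hle
    have h := ht ⟨_, hxyz⟩
    rw [coord_inducedDerivation_wedgeTriple (ht t).1 (Nat.lt_succ_of_lt (ht t).2.1) h.1 h.2.1
      hle, if_neg fun h => hne (Subtype.ext h).symm]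
  · rintro ⟨⟨a, b, c⟩, habc⟩
    have h := ht ⟨_, habc⟩
    rw [coord_inducedDerivation_wedgeTriple h.1 (Nat.lt_succ_of_lt h.2.1) h.1 h.2.1 le_rfl,
      if_pos rfl]

instance (d : ℕ) : FiniteDimensional ℝ (ThetaPD 2 3 d) := by
  rw [ThetaPD_two_three_eq_span]
  exact FiniteDimensional.span_of_finite ℝ (Set.finite_range _)

theorem finrank_ThetaPD_two_three (d : ℕ) :
    Module.finrank ℝ (ThetaPD 2 3 d) = #(triples d) := by
  rw [ThetaPD_two_three_eq_span, finrank_span_eq_card (linearIndependent_wedgeTriple d),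
    Fintype.card_coe]

theorem finrank_DImg_two_three (d : ℕ) :
    Module.finrank ℝ (DImg 2 0 3 d) = #(triples (d - 1)) := by
  apply le_antisymm
  · calc Module.finrank ℝ (DImg 2 0 3 d)
        ≤ Module.finrank ℝ ((ThetaPD 2 3 (d - 1)).map (inducedDerivation (shiftIdx 2 0))) :=
          Submodule.finrank_mono (DImg_le_map_ThetaPD 0)
      _ ≤ Module.finrank ℝ (ThetaPD 2 3 (d - 1)) := Submodule.finrank_map_le _ _
      _ = #(triples (d - 1)) := finrank_ThetaPD_two_three _
  · have hle : Submodule.span ℝ (Set.range fun t : triples (d - 1) =>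
        inducedDerivation (shiftIdx 2 0) (wedgeTriple t)) ≤ DImg 2 0 3 d := by
      rw [Submodule.span_le]
      rintro _ ⟨⟨t, ht⟩, rfl⟩
      rw [mem_triples] at ht
      refine Submodule.subset_span ⟨idxEquiv ∘ tripleVec t, ?_, ?_⟩
      · rw [sum_degIdx_idxEquiv_tripleVec]; omega
      · rw [sum_wedge_update_eq_inducedDerivation, wedge_idxEquiv_tripleVec]
    have : FiniteDimensional ℝ (DImg 2 0 3 d) :=
      Submodule.finiteDimensional_of_le (DImg_le_ThetaPD 0)
    calc #(triples (d - 1))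
        = Module.finrank ℝ (Submodule.span ℝ (Set.range fun t : triples (d - 1) =>
            inducedDerivation (shiftIdx 2 0) (wedgeTriple t))) := by
          rw [finrank_span_eq_card (linearIndependent_inducedDerivation_wedgeTriple _),
            Fintype.card_coe]
      _ ≤ Module.finrank ℝ (DImg 2 0 3 d) := Submodule.finrank_mono hle

theorem dimHpd_two_three (d : ℕ) :
    dimHpd 2 3 d = #(triples d) - #(triples (d - 1)) := by
  have hsup : (⨆ i : Fin (2 - 1), DImg 2 i 3 d) = DImg 2 0 3 d := iSup_unique (ι := Fin 1) _
  rw [dimHpd, hsup, Submodule.finrank_quotient_comap_subtype_of_le (DImg_le_ThetaPD 0),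
    finrank_ThetaPD_two_three, finrank_DImg_two_three]

end TwoThree

section Counting

open Finset

/-- Triples with smallest entry `0` are `(0, b, d + 3 - b)` with `1 ≤ b ≤ (d + 2) / 2`; the others
are the triples of `d` shifted by `(1, 1, 1)`. -/
theorem card_triples_add_three (d : ℕ) : #(triples (d + 3)) = #(triples d) + (d + 2) / 2 := by
  have hpos : #((triples (d + 3)).filter fun t => ¬t.1 = 0) = #(triples d) := by
    refine card_nbij' (fun t => (t.1 - 1, t.2.1 - 1, t.2.2 - 1))
      (fun t => (t.1 + 1, t.2.1 + 1, t.2.2 + 1)) ?_ ?_ ?_ ?_ <;>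
    · rintro ⟨a, b, c⟩; simp [mem_triples] <;> omega
  have hzero : #((triples (d + 3)).filter fun t => t.1 = 0) = #(Icc 1 ((d + 2) / 2)) := by
    refine card_nbij' (fun t => t.2.1) (fun b => (0, b, d + 3 - b)) ?_ ?_ ?_ ?_
    · rintro ⟨a, b, c⟩; simp [mem_triples]; omega
    · intro b; simp [mem_triples]; omega
    · rintro ⟨a, b, c⟩; simp [mem_triples]; omega
    · intro b; simp
  rw [← card_filter_add_card_filter_not (fun t => t.1 = 0), hpos, hzero, Nat.card_Icc]
  omega

theorem card_triples (d : ℕ) : #(triples d) = (d ^ 2 + 6) / 12 := by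
  induction d using Nat.strong_induction_on with
  | _ d ih =>
    match d with
    | 0 | 1 | 2 => decide
    | d + 3 =>
      rw [card_triples_add_three, ih d (by omega)]
      obtain ⟨q, r, hr, rfl⟩ : ∃ q r, r < 6 ∧ d = 6 * q + r := ⟨d / 6, d % 6, by omega, by omega⟩
      have h₁ : (6 * q + r + 3) ^ 2 = 36 * (q * q) + 12 * q * r + 36 * q + (r + 3) ^ 2 := by ring
      have h₂ : (6 * q + r) ^ 2 = 36 * (q * q) + 12 * q * r + r ^ 2 := by ring
      rw [h₁, h₂]
      generalize q * q = s
      interval_cases r <;> omega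

theorem card_triples_sub_card_triples_pred (d : ℕ) :
    #(triples d) - #(triples (d - 1)) = d / 6 + if d % 6 = 3 ∨ d % 6 = 5 then 1 else 0 := by
  rcases d with _ | d
  · decide
  rw [card_triples, card_triples, Nat.add_sub_cancel]
  obtain ⟨q, r, hr, rfl⟩ : ∃ q r, r < 6 ∧ d = 6 * q + r := ⟨d / 6, d % 6, by omega, by omega⟩
  have h₁ : (6 * q + r + 1) ^ 2 = 36 * (q * q) + 12 * q * r + 12 * q + (r + 1) ^ 2 := by ring
  have h₂ : (6 * q + r) ^ 2 = 36 * (q * q) + 12 * q * r + r ^ 2 := by ring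
  rw [h₁, h₂]
  generalize q * q = s
  interval_cases r <;> split_ifs <;> omega

end Counting

section Partitions

open Finset

theorem Multiset.sort_triple {α : Type*} [LinearOrder α] {x y z : α} (hxy : x ≤ y) (hyz : y ≤ z) :
    ({x, y, z} : Multiset α).sort (· ≤ ·) = [x, y, z] := by
  rw [show ({x, y, z} : Multiset α) = ↑[x, y, z] from rfl, Multiset.coe_sort,
    List.mergeSort_eq_self]
  simp [hxy, hyz, hxy.trans hyz]

theorem Multiset.exists_eq_sorted_triple {α : Type*} [LinearOrder α] {s : Multiset α}
    (hs : s.card = 3) : ∃ x y z, x ≤ y ∧ y ≤ z ∧ s = {x, y, z} := by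
  have hsorted := s.pairwise_sort (· ≤ ·)
  have hs' := s.sort_eq (· ≤ ·)
  have hlen : (s.sort (· ≤ ·)).length = 3 := by rw [Multiset.length_sort, hs]
  generalize s.sort (· ≤ ·) = l at hsorted hs' hlen
  match l, hlen with
  | [x, y, z], _ =>
    simp only [List.pairwise_cons, List.mem_cons, List.not_mem_nil] at hsorted
    exact ⟨x, y, z, by grind, by grind, hs'.symm⟩

def partitionOfTriple {n : ℕ} (t : triples n) : Nat.Partition n where
  parts := {t.1.1 + 1, t.1.2.1, t.1.2.2 - 1}
  parts_pos := by
    have := mem_triples.1 t.2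
    simp only [Multiset.insert_eq_cons, Multiset.mem_cons, Multiset.mem_singleton]
    omega
  parts_sum := by
    have := mem_triples.1 t.2
    simp only [Multiset.insert_eq_cons, Multiset.sum_cons, Multiset.sum_singleton]
    omega

theorem partitionOfTriple_injective (n : ℕ) :
    Function.Injective (partitionOfTriple (n := n)) := by
  rintro ⟨⟨a, b, c⟩, habc⟩ ⟨⟨x, y, z⟩, hxyz⟩ h
  simp only [mem_triples] at habc hxyz
  have h := congrArg (Multiset.sort · (· ≤ ·)) (congrArg Nat.Partition.parts h)
  simp only [partitionOfTriple] at h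
  rw [Multiset.sort_triple (by omega) (by omega), Multiset.sort_triple (by omega) (by omega)] at h
  simp only [List.cons.injEq] at h
  ext <;> simp <;> omega

theorem range_partitionOfTriple (n : ℕ) :
    Set.range (partitionOfTriple (n := n)) = {π | π.parts.card = 3} := by
  ext π
  constructor
  · rintro ⟨t, rfl⟩
    rfl
  · intro hπ
    obtain ⟨x, y, z, hxy, hyz, hs⟩ := Multiset.exists_eq_sorted_triple hπ
    have hpos : 0 < x := π.parts_pos (by simp [hs])
    have hsum : x + y + z = n := by simpa [hs, add_assoc] using π.parts_sum
    refine ⟨⟨(x - 1, y, z + 1), mem_triples.2 (by dsimp only; omega)⟩, ?_⟩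
    ext1
    simp only [partitionOfTriple, hs]
    congr 2; omega

theorem Ppart_three (n : ℕ) : Ppart n 3 = #(triples n) := by
  rw [Ppart, ← range_partitionOfTriple,
    Set.ncard_range_of_injective (partitionOfTriple_injective n), Nat.card_eq_fintype_card,
    Fintype.card_coe]

end Partitions

/-- for `D = 2`, `dim H^3_d(2)` is `0` for `d < 3`, `k` for
`d = 4 + 6k`, and `k+1` for `d = 3 + 6k` and for `5 + 6k ≤ d ≤ 8 + 6k`;
equivalently `P(d,3) − P(d-1,3)` takes these values. -/
theorem stmt8 :
    ((∀ d : ℕ, d < 3 → dimHpd 2 3 d = 0) ∧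
     (∀ k : ℕ, dimHpd 2 3 (4 + 6 * k) = k) ∧
     (∀ k : ℕ, dimHpd 2 3 (3 + 6 * k) = k + 1) ∧
     (∀ k d : ℕ, 5 + 6 * k ≤ d → d ≤ 8 + 6 * k → dimHpd 2 3 d = k + 1)) ∧
    ((∀ d : ℕ, d < 3 → Ppart d 3 - Ppart (d - 1) 3 = 0) ∧
     (∀ k : ℕ, Ppart (4 + 6 * k) 3 - Ppart (3 + 6 * k) 3 = k) ∧
     (∀ k : ℕ, Ppart (3 + 6 * k) 3 - Ppart (2 + 6 * k) 3 = k + 1) ∧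
     (∀ k d : ℕ, 5 + 6 * k ≤ d → d ≤ 8 + 6 * k → Ppart d 3 - Ppart (d - 1) 3 = k + 1)) := by
  have hdim (d : ℕ) : dimHpd 2 3 d = d / 6 + if d % 6 = 3 ∨ d % 6 = 5 then 1 else 0 :=
    (dimHpd_two_three d).trans (card_triples_sub_card_triples_pred d)
  have hP (d e : ℕ) (he : e = d - 1) :
      Ppart d 3 - Ppart e 3 = d / 6 + if d % 6 = 3 ∨ d % 6 = 5 then 1 else 0 := by
    rw [Ppart_three, Ppart_three, he, card_triples_sub_card_triples_pred]
  refine ⟨⟨?_, ?_, ?_, ?_⟩, ?_, ?_, ?_, ?_⟩ <;> intros <;> (first | rw [hdim] | rw [hP]) <;>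
    (try split_ifs) <;> omega
end

section
/- For D ≥ 1, the low-degree components of H(D) = Θ/(∂_{x^1}Θ + ... + ∂_{x^{D-1}}Θ) satisfy: H^p_d(D) = ℝ for d = 0, p ∈ {0,1}; H^p_d(D) = 0 for d ≥ 1, p ∈ {0,1}; H^2_2(D) = 0; H^{d+1}_d(D) ≅ ℝ^{binomial(D-1,d)} for d ≥ 0; and H^p_d(D) = 0 for p ≥ d+2. -/
noncomputable section Helpers
open ExteriorAlgebra Submodule Module

variable {D : ℕ}

lemma wedge_eq_iMulti {p : ℕ} (l : Fin p → Idx D) :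
    wedge D l = ιMulti ℝ p (fun j => Finsupp.single (l j) (1:ℝ)) := by
  rw [ExteriorAlgebra.ιMulti_apply]; rfl

lemma wedge_eq_zero {p : ℕ} (l : Fin p → Idx D) {j k : Fin p} (hjk : j ≠ k) (h : l j = l k) :
    wedge D l = 0 := by
  rw [wedge_eq_iMulti]
  exact AlternatingMap.map_eq_zero_of_eq _ _ (by rw [h]) hjk

lemma wedge_comp_perm {p : ℕ} (l : Fin p → Idx D) (σ : Equiv.Perm (Fin p)) :
    wedge D (l ∘ σ) = Equiv.Perm.sign σ • wedge D l := by
  rw [wedge_eq_iMulti, wedge_eq_iMulti l]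
  have h := AlternatingMap.map_perm (ExteriorAlgebra.ιMulti ℝ p (M := Idx D →₀ ℝ))
    (fun j => Finsupp.single (l j) (1:ℝ)) σ
  simp only [Function.comp_def] at h ⊢
  exact h

lemma wedge_swap {p : ℕ} (u : Fin p → Idx D) {j1 j2 : Fin p} (h : j1 ≠ j2) :
    wedge D (u ∘ Equiv.swap j1 j2) = - wedge D u := by
  rw [wedge_eq_iMulti, wedge_eq_iMulti u]
  have h2 := AlternatingMap.map_swap (ExteriorAlgebra.ιMulti ℝ p (M := Idx D →₀ ℝ))
    (fun j => Finsupp.single (u j) (1:ℝ)) h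
  simp only [Function.comp_def] at h2 ⊢
  exact h2

lemma degIdx_zero : degIdx D 0 = 0 := by simp [degIdx]

lemma degIdx_add (S T : Idx D) : degIdx D (S + T) = degIdx D S + degIdx D T := by
  simp [degIdx, Finset.sum_add_distrib]

lemma degIdx_psingle (i : Fin (D-1)) : degIdx D (Pi.single i 1) = 1 := by
  simp [degIdx]

lemma eq_zero_of_degIdx {S : Idx D} (h : degIdx D S = 0) : S = 0 := by
  funext i
  exact (Finset.sum_eq_zero_iff.mp h) i (Finset.mem_univ i)

lemma degIdx_eq_one {S : Idx D} (h : degIdx D S = 1) : ∃ i, S = Pi.single i 1 := by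
  obtain ⟨i, hi⟩ : ∃ i, S i ≠ 0 := by
    by_contra hc; push_neg at hc
    rw [show S = 0 from funext hc, degIdx_zero] at h; exact absurd h (by norm_num)
  have h1 : S i ≤ 1 := h ▸ Finset.single_le_sum (f := S) (fun _ _ => Nat.zero_le _) (Finset.mem_univ i)
  have hSi : S i = 1 := le_antisymm h1 (Nat.one_le_iff_ne_zero.mpr hi)
  have hsum := Finset.add_sum_erase Finset.univ S (Finset.mem_univ i)
  have h2 : ∑ j ∈ Finset.univ.erase i, S j = 0 := by
    have : degIdx D S = ∑ j, S j := rfl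
    omega
  refine ⟨i, funext fun j => ?_⟩
  rcases eq_or_ne j i with rfl | hji
  · simp [hSi]
  · have := Finset.sum_eq_zero_iff.mp h2 j (Finset.mem_erase.mpr ⟨hji, Finset.mem_univ j⟩)
    simp [this, Pi.single_eq_of_ne hji]

lemma exists_peel {S : Idx D} (h : S ≠ 0) :
    ∃ (i : Fin (D-1)) (S' : Idx D), S' + Pi.single i 1 = S := by
  obtain ⟨i, hi⟩ : ∃ i, S i ≠ 0 := by
    by_contra hc; push_neg at hc; exact h (funext hc)
  refine ⟨i, fun j => S j - (Pi.single i 1 : Idx D) j, funext fun j => ?_⟩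
  rcases eq_or_ne j i with rfl | hji
  · simp only [Pi.add_apply, Pi.single_eq_same]; omega
  · simp [Pi.single_eq_of_ne hji]

lemma degIdx_eq_two {S : Idx D} (h : degIdx D S = 2) :
    ∃ a b, S = Pi.single a 1 + Pi.single b 1 := by
  obtain ⟨i, S', hS⟩ := exists_peel (S := S) (fun h0 => by rw [h0, degIdx_zero] at h; omega)
  have hd : degIdx D S' = 1 := by
    have := degIdx_add S' (Pi.single i 1)
    rw [hS, degIdx_psingle] at this; omega
  obtain ⟨a, ha⟩ := degIdx_eq_one hd
  exact ⟨a, i, by rw [← hS, ha]⟩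

lemma exists_two_zeros {p d : ℕ} (l : Fin p → Idx D) (hsum : ∑ j, degIdx D (l j) = d)
    (hp : d + 2 ≤ p) : ∃ j1 j2 : Fin p, j1 ≠ j2 ∧ l j1 = 0 ∧ l j2 = 0 := by
  classical
  have hcard : (Finset.univ.filter (fun j => ¬ l j = 0)).card ≤ d := by
    calc (Finset.univ.filter (fun j => ¬ l j = 0)).card
        = ∑ _j ∈ Finset.univ.filter (fun j => ¬ l j = 0), 1 := by simp
      _ ≤ ∑ j ∈ Finset.univ.filter (fun j => ¬ l j = 0), degIdx D (l j) :=
          Finset.sum_le_sum (fun j hj => Nat.one_le_iff_ne_zero.mpr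
            (fun h0 => (Finset.mem_filter.mp hj).2 (eq_zero_of_degIdx h0)))
      _ ≤ ∑ j, degIdx D (l j) := Finset.sum_le_sum_of_subset (Finset.filter_subset _ _)
      _ = d := hsum
  have hcc := Finset.card_filter_add_card_filter_not
    (s := (Finset.univ : Finset (Fin p))) (p := fun j => l j = 0)
  rw [Finset.card_univ, Fintype.card_fin] at hcc
  obtain ⟨j1, hj1, j2, hj2, hne⟩ := Finset.one_lt_card.mp
    (show 1 < (Finset.univ.filter (fun j => l j = 0)).card by omega)
  exact ⟨j1, j2, hne, (Finset.mem_filter.mp hj1).2, (Finset.mem_filter.mp hj2).2⟩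

lemma dimHpd_eq_zero_of_le {p d : ℕ}
    (h : ThetaPD D p d ≤ ⨆ i : Fin (D-1), DImg D i p d) : dimHpd D p d = 0 := by
  have ht : Submodule.comap (ThetaPD D p d).subtype (⨆ i : Fin (D - 1), DImg D i p d) = ⊤ :=
    eq_top_iff.mpr fun x _ => Submodule.mem_comap.mpr (h x.2)
  have : Subsingleton (↥(ThetaPD D p d) ⧸
      Submodule.comap (ThetaPD D p d).subtype (⨆ i : Fin (D - 1), DImg D i p d)) :=
    Submodule.Quotient.subsingleton_iff.mpr ht
  exact Module.finrank_zero_of_subsingleton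

lemma dimHpd_eq_finrank {p d : ℕ} (h : ∀ i : Fin (D-1), DImg D i p d = ⊥) :
    dimHpd D p d = finrank ℝ (ThetaPD D p d) := by
  unfold dimHpd
  have h1 : (⨆ i : Fin (D-1), DImg D i p d) = ⊥ := by simp [h]
  rw [h1, Submodule.comap_bot, Submodule.ker_subtype]
  exact (Submodule.quotEquivOfEqBot ⊥ rfl).finrank_eq

end Helpers

noncomputable section Cases
open ExteriorAlgebra Submodule Module
variable {D : ℕ}

lemma thetaPD_0d_bot {d : ℕ} (hd : 1 ≤ d) : ThetaPD D 0 d = ⊥ := by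
  rw [ThetaPD, Submodule.span_eq_bot]
  rintro x ⟨l, hl, rfl⟩
  rw [Finset.univ_eq_empty, Finset.sum_empty] at hl
  exact absurd hl (by omega)

lemma thetaPD_big_bot {p d : ℕ} (hp : d + 2 ≤ p) : ThetaPD D p d = ⊥ := by
  rw [ThetaPD, Submodule.span_eq_bot]
  rintro x ⟨l, hl, rfl⟩
  obtain ⟨j1, j2, hne, h1, h2⟩ := exists_two_zeros l hl hp
  exact wedge_eq_zero l hne (h1.trans h2.symm)

lemma dimg_d0_bot (i : Fin (D-1)) (p : ℕ) : DImg D i p 0 = ⊥ := by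
  rw [DImg, Submodule.span_eq_bot]
  rintro x ⟨l, hl, rfl⟩
  exact absurd hl (by omega)

lemma dimg_succ_bot (i : Fin (D-1)) (d : ℕ) : DImg D i (d+1) d = ⊥ := by
  rw [DImg, Submodule.span_eq_bot]
  rintro x ⟨l, hl, rfl⟩
  obtain ⟨j1, j2, hne, h1, h2⟩ := exists_two_zeros l rfl (by omega)
  have hzero : ∀ j ∈ (Finset.univ : Finset (Fin (d+1))), j ∉ ({j1, j2} : Finset (Fin (d+1))) →
      wedge D (Function.update l j (l j + Pi.single i 1)) = 0 := by
    intro j _ hj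
    simp only [Finset.mem_insert, Finset.mem_singleton, not_or] at hj
    refine wedge_eq_zero _ hne ?_
    rw [Function.update_of_ne (Ne.symm hj.1) _ l, Function.update_of_ne (Ne.symm hj.2) _ l, h1, h2]
  rw [← Finset.sum_subset (Finset.subset_univ ({j1, j2} : Finset (Fin (d+1)))) hzero,
    Finset.sum_pair hne]
  have key : Function.update l j2 (l j2 + Pi.single i 1) =
      (Function.update l j1 (l j1 + Pi.single i 1)) ∘ Equiv.swap j1 j2 := by
    funext j
    rcases eq_or_ne j j1 with rfl | hj1
    · rw [Function.update_of_ne hne _ l, Function.comp_apply, Equiv.swap_apply_left,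
        Function.update_of_ne (Ne.symm hne) _ l, h1, h2]
    · rcases eq_or_ne j j2 with rfl | hj2
      · rw [Function.update_self, Function.comp_apply, Equiv.swap_apply_right,
          Function.update_self, h1, h2]
      · rw [Function.update_of_ne hj2 _ l, Function.comp_apply,
          Equiv.swap_apply_of_ne_of_ne hj1 hj2, Function.update_of_ne hj1 _ l]
  rw [key, wedge_swap _ hne, add_neg_cancel]

lemma h1d_le {d : ℕ} (hd : 1 ≤ d) : ThetaPD D 1 d ≤ ⨆ i : Fin (D-1), DImg D i 1 d := by
  rw [ThetaPD, Submodule.span_le]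
  rintro x ⟨l, hl, rfl⟩
  rw [Fin.sum_univ_one] at hl
  obtain ⟨i, S', hS⟩ := exists_peel (S := l 0) (fun h0 => by rw [h0, degIdx_zero] at hl; omega)
  refine le_iSup (fun i => DImg D i 1 d) i (Submodule.subset_span ⟨fun _ => S', ?_, ?_⟩)
  · rw [Fin.sum_univ_one]
    show degIdx D S' + 1 = d
    have h2 := degIdx_add S' (Pi.single i 1)
    rw [hS, degIdx_psingle] at h2; omega
  · rw [Fin.sum_univ_one]
    have hupd : l = Function.update (fun _ : Fin 1 => S') 0
        ((fun _ : Fin 1 => S') 0 + Pi.single i 1) := by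
      funext j
      rw [Subsingleton.elim j 0, Function.update_self]
      exact hS.symm
    rw [hupd]

end Cases

noncomputable section Main
open ExteriorAlgebra Submodule Module
variable {D : ℕ}

abbrev KT (D d : ℕ) := {T : Finset (Fin (D-1)) // T.card = d}

def clT {D d : ℕ} (T : KT D d) : Fin (d+1) → Idx D :=
  Fin.cons 0 (fun k => Pi.single ((T.1.orderIsoOfFin T.2 k : Fin (D-1))) 1)

def WW (D d : ℕ) (T : KT D d) : Th D := wedge D (clT T)

lemma psingle_inj {a b : Fin (D-1)} (h : (Pi.single a 1 : Idx D) = Pi.single b 1) : a = b := by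
  by_contra hab
  have h2 := congrFun h a
  rw [Pi.single_eq_same, Pi.single_eq_of_ne hab] at h2
  exact one_ne_zero h2

lemma psingle_ne_zero (i : Fin (D-1)) : (Pi.single i 1 : Idx D) ≠ 0 := fun h => by
  have h2 := congrFun h i
  rw [Pi.single_eq_same] at h2
  exact one_ne_zero h2

lemma clT_injective {d : ℕ} (T : KT D d) : Function.Injective (clT T) := by
  rw [clT, Fin.cons_injective_iff]
  constructor
  · rintro ⟨k, hk⟩
    exact psingle_ne_zero _ hk
  · intro a b hab
    exact (T.1.orderIsoOfFin T.2).injective (Subtype.ext (psingle_inj hab))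

def AA (D d : ℕ) (T : KT D d) : ((Idx D →₀ ℝ) [⋀^Fin (d+1)]→ₗ[ℝ] ℝ) :=
  ((Pi.basisFun ℝ (Fin (d+1))).det).compLinearMap
    (LinearMap.pi (fun k => Finsupp.lapply (clT T k)))

lemma AA_eval {d : ℕ} (T : KT D d) (m : Fin (d+1) → (Idx D →₀ ℝ)) :
    AA D d T m = Matrix.det (Matrix.of fun i j => m j (clT T i)) := by
  rw [AA, AlternatingMap.compLinearMap_apply, Basis.det_apply]
  congr 1

lemma AA_W {d : ℕ} (T T' : KT D d) :
    AA D d T (fun j => Finsupp.single (clT T' j) (1:ℝ)) = if T = T' then 1 else 0 := by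
  rw [AA_eval]
  by_cases h : T = T'
  · subst h
    rw [if_pos rfl]
    have hm : (Matrix.of fun i j => (Finsupp.single (clT T j) (1:ℝ)) (clT T i)) =
        (1 : Matrix (Fin (d+1)) (Fin (d+1)) ℝ) := by
      ext i j
      rw [Matrix.of_apply, Finsupp.single_apply, Matrix.one_apply]
      by_cases hij : i = j
      · rw [if_pos (by rw [hij]), if_pos hij]
      · rw [if_neg (fun hc => hij (clT_injective T hc).symm), if_neg hij]
    rw [hm, Matrix.det_one]
  · rw [if_neg h]
    obtain ⟨i0, hi0T, hi0T'⟩ : ∃ i0, i0 ∈ T.1 ∧ i0 ∉ T'.1 := by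
      by_contra hc
      push_neg at hc
      exact h (Subtype.ext (Finset.eq_of_subset_of_card_le hc (le_of_eq (T'.2.trans T.2.symm))))
    obtain ⟨k0, hk0⟩ : ∃ k0 : Fin d, ((T.1.orderIsoOfFin T.2 k0 : Fin (D-1))) = i0 :=
      ⟨(T.1.orderIsoOfFin T.2).symm ⟨i0, hi0T⟩, by simp⟩
    apply Matrix.det_eq_zero_of_row_eq_zero k0.succ
    intro j
    rw [Matrix.of_apply, Finsupp.single_apply, if_neg]
    have hTk : clT T k0.succ = Pi.single i0 1 := by rw [clT, Fin.cons_succ, hk0]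
    rw [hTk]
    refine Fin.cases ?_ ?_ j
    · rw [clT, Fin.cons_zero]
      exact fun hc => psingle_ne_zero i0 hc.symm
    · intro k hc
      rw [clT, Fin.cons_succ] at hc
      exact hi0T' (psingle_inj hc ▸ (T'.1.orderIsoOfFin T'.2 k).2)

def phi (D d : ℕ) (T : KT D d) : Th D →ₗ[ℝ] ℝ :=
  ExteriorAlgebra.liftAlternating
    (Function.update (fun i => (0 : (Idx D →₀ ℝ) [⋀^Fin i]→ₗ[ℝ] ℝ)) (d+1) (AA D d T))

lemma phi_W {d : ℕ} (T T' : KT D d) : phi D d T (WW D d T') = if T = T' then 1 else 0 := by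
  rw [WW, wedge_eq_iMulti, phi, ExteriorAlgebra.liftAlternating_apply_ιMulti,
    Function.update_self, AA_W]

lemma WW_indep (D d : ℕ) : LinearIndependent ℝ (WW D d) := by
  rw [Fintype.linearIndependent_iff]
  intro g hg T
  have h2 := congrArg (phi D d T) hg
  rw [map_sum, map_zero] at h2
  simp only [map_smul, phi_W, smul_eq_mul, mul_ite, mul_one, mul_zero] at h2
  rwa [Finset.sum_ite_eq, if_pos (Finset.mem_univ T)] at h2

lemma sum_deg_clT {d : ℕ} (T : KT D d) : ∑ j, degIdx D (clT T j) = d := by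
  rw [Fin.sum_univ_succ]
  simp only [clT, Fin.cons_zero, Fin.cons_succ, degIdx_zero, degIdx_psingle]
  simp

lemma exists_perm_comp {n : ℕ} {X : Type*} {f g : Fin n → X} (hf : Function.Injective f)
    (hg : Function.Injective g) (hr : Set.range f = Set.range g) :
    ∃ σ : Equiv.Perm (Fin n), g ∘ σ = f := by
  refine ⟨(Equiv.ofInjective f hf).trans ((Equiv.setCongr hr).trans
    (Equiv.ofInjective g hg).symm), ?_⟩
  funext j
  rw [Function.comp_apply, Equiv.trans_apply, Equiv.trans_apply,
    Equiv.apply_ofInjective_symm hg]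
  rfl

lemma all_one_of_sum_eq_card {n : ℕ} {s : Finset (Fin n)} {f : Fin n → ℕ}
    (h1 : ∀ a ∈ s, 1 ≤ f a) (h2 : ∑ a ∈ s, f a = s.card) : ∀ a ∈ s, f a = 1 := by
  intro a ha
  by_contra hne
  have h3 : 2 ≤ f a := by have := h1 a ha; omega
  have h4 : (s.erase a).card ≤ ∑ b ∈ s.erase a, f b := by
    calc (s.erase a).card = ∑ _b ∈ s.erase a, 1 := by simp
    _ ≤ _ := Finset.sum_le_sum (fun b hb => h1 b (Finset.mem_of_mem_erase hb))
  have h5 := Finset.add_sum_erase s f ha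
  have h6 := Finset.card_erase_of_mem ha
  have h7 : 1 ≤ s.card := Finset.card_pos.mpr ⟨a, ha⟩
  omega

lemma thetaPD_succ_le (D d : ℕ) :
    ThetaPD D (d+1) d ≤ Submodule.span ℝ (Set.range (WW D d)) := by
  rw [ThetaPD, Submodule.span_le]
  rintro x ⟨l, hl, rfl⟩
  by_cases hinj : Function.Injective l
  case neg =>
    obtain ⟨a, b, hab, hne⟩ := Function.not_injective_iff.mp hinj
    rw [SetLike.mem_coe, wedge_eq_zero l hne hab]
    exact Submodule.zero_mem _
  case pos =>
  obtain ⟨j0, hj0⟩ : ∃ j0, l j0 = 0 := by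
    by_contra hc
    push_neg at hc
    have hge : ∀ j, 1 ≤ degIdx D (l j) :=
      fun j => Nat.one_le_iff_ne_zero.mpr (fun h0 => hc j (eq_zero_of_degIdx h0))
    have hbig : (d+1 : ℕ) ≤ ∑ j, degIdx D (l j) := by
      calc (d+1 : ℕ) = ∑ _j : Fin (d+1), 1 := by simp
      _ ≤ _ := Finset.sum_le_sum (fun j _ => hge j)
    omega
  have hone : ∀ j, j ≠ j0 → degIdx D (l j) = 1 := by
    have h5 := Finset.add_sum_erase Finset.univ (fun j => degIdx D (l j)) (Finset.mem_univ j0)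
    simp only [hj0, degIdx_zero] at h5
    have hsum' : ∑ j ∈ Finset.univ.erase j0, degIdx D (l j) = d := by omega
    intro j hj
    refine all_one_of_sum_eq_card (s := Finset.univ.erase j0) (f := fun j => degIdx D (l j)) (fun a ha => ?_) ?_ j
      (Finset.mem_erase.mpr ⟨hj, Finset.mem_univ j⟩)
    · have ha' : a ≠ j0 := (Finset.mem_erase.mp ha).1
      refine Nat.one_le_iff_ne_zero.mpr (fun h0 => ha' (hinj ?_))
      rw [eq_zero_of_degIdx h0, hj0]
    · rw [hsum', Finset.card_erase_of_mem (Finset.mem_univ j0), Finset.card_univ,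
        Fintype.card_fin]
      omega
  have hex : ∀ k : Fin d, ∃ i, l (j0.succAbove k) = Pi.single i 1 :=
    fun k => degIdx_eq_one (hone _ (Fin.succAbove_ne j0 k))
  choose ind hind using hex
  have hindinj : Function.Injective ind := by
    intro a b hab
    have h2 : l (j0.succAbove a) = l (j0.succAbove b) := by rw [hind, hind, hab]
    exact Fin.succAbove_right_injective (hinj h2)
  have hTcard : (Finset.image ind Finset.univ).card = d := by
    rw [Finset.card_image_of_injective _ hindinj, Finset.card_univ, Fintype.card_fin]
  set Tk : KT D d := ⟨Finset.image ind Finset.univ, hTcard⟩ with hTk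
  have hrange : Set.range l = Set.range (clT Tk) := by
    apply Set.eq_of_subset_of_subset
    · rintro _ ⟨j, rfl⟩
      rcases eq_or_ne j j0 with rfl | hj
      · exact ⟨0, by rw [clT, Fin.cons_zero, hj0]⟩
      · obtain ⟨k, rfl⟩ := Fin.exists_succAbove_eq hj
        have hmem : ind k ∈ Tk.1 := Finset.mem_image_of_mem ind (Finset.mem_univ k)
        obtain ⟨k', hk'⟩ : ∃ k', (Tk.1.orderIsoOfFin Tk.2 k' : Fin (D-1)) = ind k :=
          ⟨(Tk.1.orderIsoOfFin Tk.2).symm ⟨ind k, hmem⟩, by simp⟩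
        exact ⟨k'.succ, by rw [clT, Fin.cons_succ, hk', hind]⟩
    · rintro _ ⟨j, rfl⟩
      refine Fin.cases ?_ ?_ j
      · exact ⟨j0, by rw [clT, Fin.cons_zero, hj0]⟩
      · intro k
        have hmem := (Tk.1.orderIsoOfFin Tk.2 k).2
        obtain ⟨k', _, hk'⟩ := Finset.mem_image.mp hmem
        exact ⟨j0.succAbove k', by rw [clT, Fin.cons_succ, hind, hk']⟩
  obtain ⟨σ, hσ⟩ := exists_perm_comp (clT_injective Tk) hinj hrange.symm
  have hw : WW D d Tk = Equiv.Perm.sign σ • wedge D l := by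
    rw [WW, ← hσ]; exact wedge_comp_perm l σ
  have hmem : WW D d Tk ∈ Submodule.span ℝ (Set.range (WW D d)) :=
    Submodule.subset_span (Set.mem_range_self _)
  rw [SetLike.mem_coe]
  rcases Int.units_eq_one_or (Equiv.Perm.sign σ) with hs | hs
  · rw [hs, one_smul] at hw; rwa [← hw]
  · rw [hs] at hw
    have hneg : WW D d Tk = - wedge D l := by
      rw [hw, Units.smul_def]
      norm_num
    have hval : wedge D l = - WW D d Tk := by rw [hneg, neg_neg]
    rw [hval]
    exact Submodule.neg_mem _ hmem

lemma thetaPD_succ_eq (D d : ℕ) :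
    ThetaPD D (d+1) d = Submodule.span ℝ (Set.range (WW D d)) := by
  refine le_antisymm (thetaPD_succ_le D d) (Submodule.span_le.mpr ?_)
  rintro _ ⟨T, rfl⟩
  exact Submodule.subset_span ⟨clT T, sum_deg_clT T, rfl⟩

lemma dim_succ (D d : ℕ) : dimHpd D (d+1) d = Nat.choose (D-1) d := by
  rw [dimHpd_eq_finrank (fun i => dimg_succ_bot i d), thetaPD_succ_eq,
    finrank_span_eq_card (WW_indep D d), Fintype.card_finset_len, Fintype.card_fin]

end Main

noncomputable section Final
open ExteriorAlgebra Submodule Module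
variable {D : ℕ}

lemma wedge_nil (l : Fin 0 → Idx D) : wedge D l = 1 := by
  simp [wedge]

lemma thetaPD_00 : ThetaPD D 0 0 = Submodule.span ℝ {(1 : Th D)} := by
  rw [ThetaPD]
  congr 1
  ext x
  constructor
  · rintro ⟨l, _, rfl⟩
    rw [wedge_nil]
    exact Set.mem_singleton 1
  · intro hx
    rw [Set.mem_singleton_iff] at hx
    exact ⟨Fin.elim0, by simp, by rw [hx, wedge_nil]⟩

lemma dim00 : dimHpd D 0 0 = 1 := by
  rw [dimHpd_eq_finrank (fun i => dimg_d0_bot i 0), thetaPD_00]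
  exact finrank_span_singleton one_ne_zero

lemma vec_two (l : Fin 2 → Idx D) : l = ![l 0, l 1] := by
  funext j; fin_cases j <;> rfl

lemma update_two_0 (A B C : Idx D) : Function.update ![A,B] 0 C = ![C,B] := by
  funext j; fin_cases j <;> simp [Function.update]

lemma update_two_1 (A B C : Idx D) : Function.update ![A,B] 1 C = ![A,C] := by
  funext j; fin_cases j <;> simp [Function.update]

lemma wedge2_antisymm (A B : Idx D) : wedge D ![B,A] = - wedge D ![A,B] := by
  have h : (![B,A] : Fin 2 → Idx D) = ![A,B] ∘ Equiv.swap 0 1 := by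
    funext j; fin_cases j <;> simp [Equiv.swap_apply_def]
  rw [h, wedge_swap _ (show (0 : Fin 2) ≠ 1 by decide)]

lemma dimg2_elem (i : Fin (D-1)) (A B : Idx D) (hdeg : degIdx D A + degIdx D B = 1) :
    wedge D ![A + Pi.single i 1, B] + wedge D ![A, B + Pi.single i 1] ∈ DImg D i 2 2 := by
  apply Submodule.subset_span
  refine ⟨![A, B], ?_, ?_⟩
  · rw [Fin.sum_univ_two]
    simp only [Matrix.cons_val_zero, Matrix.cons_val_one, Matrix.head_cons]
    omega
  · rw [Fin.sum_univ_two]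
    simp only [Matrix.cons_val_zero, Matrix.cons_val_one, Matrix.head_cons]
    rw [update_two_0, update_two_1]

lemma mem_sup2 {i : Fin (D-1)} {x : Th D} (h : x ∈ DImg D i 2 2) :
    x ∈ ⨆ i : Fin (D-1), DImg D i 2 2 := le_iSup (fun i => DImg D i 2 2) i h

lemma u_mem (a b : Fin (D-1)) :
    wedge D ![Pi.single a 1 + Pi.single b 1, 0] ∈ (⨆ i : Fin (D-1), DImg D i 2 2) ∧
    wedge D ![Pi.single a 1, Pi.single b 1] ∈ ⨆ i : Fin (D-1), DImg D i 2 2 := by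
  have hA := dimg2_elem b (Pi.single a 1) 0 (by rw [degIdx_psingle, degIdx_zero])
  have hB := dimg2_elem a (Pi.single b 1) 0 (by rw [degIdx_psingle, degIdx_zero])
  rw [zero_add] at hA hB
  rw [show (Pi.single b 1 : Idx D) + Pi.single a 1 = Pi.single a 1 + Pi.single b 1
    from add_comm _ _] at hB
  rw [wedge2_antisymm (Pi.single a 1) (Pi.single b 1)] at hB
  have h1 := mem_sup2 hA
  have h2 := mem_sup2 hB
  set u := wedge D ![Pi.single a 1 + Pi.single b 1, 0]
  set v := wedge D ![Pi.single a 1, Pi.single b 1]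
  constructor
  · have hu : u = (2⁻¹ : ℝ) • ((u + v) + (u + -v)) := by module
    rw [hu]
    exact Submodule.smul_mem _ _ (Submodule.add_mem _ h1 h2)
  · have hv : v = (2⁻¹ : ℝ) • ((u + v) - (u + -v)) := by module
    rw [hv]
    exact Submodule.smul_mem _ _ (Submodule.sub_mem _ h1 h2)

lemma h22_le : ThetaPD D 2 2 ≤ ⨆ i : Fin (D-1), DImg D i 2 2 := by
  rw [ThetaPD, Submodule.span_le]
  rintro x ⟨l, hl, rfl⟩
  obtain ⟨A, B, rfl⟩ : ∃ A B, l = ![A, B] := ⟨l 0, l 1, vec_two l⟩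
  rw [Fin.sum_univ_two] at hl
  simp only [Matrix.cons_val_zero, Matrix.cons_val_one, Matrix.head_cons] at hl
  rw [SetLike.mem_coe]
  have hcases : (degIdx D A = 0 ∧ degIdx D B = 2) ∨ (degIdx D A = 1 ∧ degIdx D B = 1) ∨
      (degIdx D A = 2 ∧ degIdx D B = 0) := by omega
  rcases hcases with ⟨hA0, hB2⟩ | ⟨hA1, hB1⟩ | ⟨hA2, hB0⟩
  · obtain rfl := eq_zero_of_degIdx hA0
    obtain ⟨a, b, rfl⟩ := degIdx_eq_two hB2
    rw [wedge2_antisymm (Pi.single a 1 + Pi.single b 1) 0]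
    exact Submodule.neg_mem _ (u_mem a b).1
  · obtain ⟨a, rfl⟩ := degIdx_eq_one hA1
    obtain ⟨b, rfl⟩ := degIdx_eq_one hB1
    exact (u_mem a b).2
  · obtain rfl := eq_zero_of_degIdx hB0
    obtain ⟨a, b, rfl⟩ := degIdx_eq_two hA2
    exact (u_mem a b).1

end Final


/-- for `D ≥ 1`, the low-degree components of
`H(D) = Θ/(∂_{x^1}Θ + ⋯ + ∂_{x^{D-1}}Θ)` satisfy: `H^p_0(D) = ℝ` for `p ∈ {0,1}`;
`H^p_d(D) = 0` for `d ≥ 1`, `p ∈ {0,1}`; `H^2_2(D) = 0`; `H^{d+1}_d(D) ≅ ℝ^{C(D-1,d)}`;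
and `H^p_d(D) = 0` for `p ≥ d + 2`. -/
theorem stmt12 (D : ℕ) (hD : 1 ≤ D) :
    dimHpd D 0 0 = 1 ∧ dimHpd D 1 0 = 1 ∧
    (∀ d : ℕ, 1 ≤ d → dimHpd D 0 d = 0 ∧ dimHpd D 1 d = 0) ∧
    dimHpd D 2 2 = 0 ∧
    (∀ d : ℕ, dimHpd D (d + 1) d = Nat.choose (D - 1) d) ∧
    (∀ p d : ℕ, d + 2 ≤ p → dimHpd D p d = 0) := by
  refine ⟨dim00, ?_, ?_, ?_, fun d => dim_succ D d, ?_⟩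
  · have h := dim_succ D 0
    rwa [Nat.choose_zero_right] at h
  · intro d hd
    exact ⟨dimHpd_eq_zero_of_le (by rw [thetaPD_0d_bot hd]; exact bot_le),
      dimHpd_eq_zero_of_le (h1d_le hd)⟩
  · exact dimHpd_eq_zero_of_le h22_le
  · intro p d hp
    exact dimHpd_eq_zero_of_le (by rw [thetaPD_big_bot hp]; exact bot_le)
end

section
/- In the exterior algebra Θ on odd generators θ^S (S ∈ ℤ_{≥0}^{D-1}), every element of Θ^2_2 lies in ∂_{x^1}Θ^2_1 + ... + ∂_{x^{D-1}}Θ^2_1; i.e. any element Σ_{i,j=1}^{D-1}(a_{ij} θ^{ξ_i}θ^{ξ_j} + b_{ij} θ^0 θ^{ξ_i+ξ_j}) with a antisymmetric and b symmetric can be written as Σ_{i,j} c_{ij}(θ^{ξ_i}θ^{ξ_j} + θ^0 θ^{ξ_i+ξ_j}) for some matrix c, so H^2_2(D) = 0. -/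
-- auxiliary lemmas

lemma wedge_two_s13 (D : ℕ) (l : Fin 2 → Idx D) :
    wedge D l = theta D (l 0) * theta D (l 1) := by
  simp [wedge, List.ofFn_succ]

lemma theta_swap (D : ℕ) (S T : Idx D) :
    theta D T * theta D S = -(theta D S * theta D T) := by
  have := ExteriorAlgebra.ι_add_mul_swap (R := ℝ)
    (Finsupp.single S (1:ℝ)) (Finsupp.single T (1:ℝ))
  unfold theta
  rw [add_comm] at this
  exact eq_neg_of_add_eq_zero_left this

lemma deg_single (D : ℕ) (i : Fin (D-1)) : degIdx D (Pi.single i 1) = 1 := by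
  simp [degIdx, Finset.sum_pi_single']

lemma key (D : ℕ) (i : Fin (D-1)) (S T : Idx D) (h : degIdx D S + degIdx D T + 1 = 2) :
    theta D (S + Pi.single i 1) * theta D T + theta D S * theta D (T + Pi.single i 1)
      ∈ DImg D i 2 2 := by
  apply Submodule.subset_span
  refine ⟨![S, T], ?_, ?_⟩
  · simpa [Fin.sum_univ_two] using h
  · simp [Fin.sum_univ_two, wedge_two_s13, Function.update]

lemma deg_step (D : ℕ) (n : ℕ) (hD : 1 ≤ D) (S : Idx D) (h : degIdx D S = n + 1) :
    ∃ (i : Fin (D-1)) (S' : Idx D), degIdx D S' = n ∧ S = S' + Pi.single i 1 := by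
  have hne : ∃ i, S i ≠ 0 := by
    by_contra hc
    push_neg at hc
    have : degIdx D S = 0 := Finset.sum_eq_zero fun i _ => hc i
    omega
  obtain ⟨i, hi⟩ := hne
  refine ⟨i, fun j => if j = i then S j - 1 else S j, ?_, ?_⟩
  · have h1 : degIdx D S = S i + ∑ j ∈ Finset.univ.erase i, S j :=
      (Finset.add_sum_erase _ _ (Finset.mem_univ i)).symm
    have h2 : degIdx D (fun j => if j = i then S j - 1 else S j)
        = (S i - 1) + ∑ j ∈ Finset.univ.erase i, S j := by
      rw [degIdx, ← Finset.add_sum_erase _ _ (Finset.mem_univ i)]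
      simp only [if_pos rfl]
      congr 1
      exact Finset.sum_congr rfl fun j hj => by
        simp [Finset.mem_erase.mp hj |>.1]
    omega
  · funext j
    by_cases hj : j = i
    · subst hj; simp; omega
    · simp [hj, Pi.single_apply]

lemma deg_zero (D : ℕ) (S : Idx D) (h : degIdx D S = 0) : S = 0 := by
  funext j
  have := Finset.sum_eq_zero_iff.mp h j (Finset.mem_univ j)
  simpa using this

/-- every element of `Θ^2_2` lies in
`∂_{x^1}Θ^2_1 + ⋯ + ∂_{x^{D-1}}Θ^2_1`, so `H^2_2(D) = 0`; equivalently (as spelled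
out in the statement) the linear map `c ↦ (c − cᵀ, c + cᵀ)` is surjective onto
antisymmetric × symmetric pairs of `(D-1) × (D-1)` real matrices. -/
theorem stmt13 (D : ℕ) (hD : 1 ≤ D) :
    (∀ x ∈ ThetaPD D 2 2, x ∈ ⨆ i : Fin (D - 1), DImg D i 2 2) ∧
    (∀ a b : Matrix (Fin (D - 1)) (Fin (D - 1)) ℝ, a.transpose = -a → b.transpose = b →
      ∃ c : Matrix (Fin (D - 1)) (Fin (D - 1)) ℝ,
        c - c.transpose = a ∧ c + c.transpose = b) := by
  constructor
  · set M := ⨆ i : Fin (D - 1), DImg D i 2 2 with hM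
    -- the key generators
    have hA : ∀ i j : Fin (D-1),
        theta D (Pi.single i 1) * theta D (Pi.single j 1)
          + theta D 0 * theta D (Pi.single i 1 + Pi.single j 1) ∈ M := by
      intro i j
      have h := key D i 0 (Pi.single j 1) (by simp [deg_single, degIdx])
      rw [zero_add, add_comm (Pi.single j 1) (Pi.single i 1)] at h
      exact Submodule.mem_iSup_of_mem i h
    -- membership of the two kinds of monomials
    have hy : ∀ i j : Fin (D-1),
        theta D 0 * theta D (Pi.single i 1 + Pi.single j 1) ∈ M := by
      intro i j
      have heq : theta D 0 * theta D (Pi.single i 1 + Pi.single j 1)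
          = (2:ℝ)⁻¹ • (theta D (Pi.single i 1) * theta D (Pi.single j 1)
              + theta D 0 * theta D (Pi.single i 1 + Pi.single j 1))
          + (2:ℝ)⁻¹ • (theta D (Pi.single j 1) * theta D (Pi.single i 1)
              + theta D 0 * theta D (Pi.single j 1 + Pi.single i 1)) := by
        rw [theta_swap D (Pi.single i 1) (Pi.single j 1),
          add_comm (Pi.single j 1) (Pi.single i 1)]
        module
      rw [heq]
      exact M.add_mem (M.smul_mem _ (hA i j)) (M.smul_mem _ (hA j i))
    have hx : ∀ i j : Fin (D-1),
        theta D (Pi.single i 1) * theta D (Pi.single j 1) ∈ M := by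
      intro i j
      have heq : theta D (Pi.single i 1) * theta D (Pi.single j 1)
          = (theta D (Pi.single i 1) * theta D (Pi.single j 1)
              + theta D 0 * theta D (Pi.single i 1 + Pi.single j 1))
          - theta D 0 * theta D (Pi.single i 1 + Pi.single j 1) :=
        (add_sub_cancel_right _ _).symm
      rw [heq]
      exact M.sub_mem (hA i j) (hy i j)
    intro x hxmem
    refine Submodule.span_induction ?_ (Submodule.zero_mem M)
      (fun a b _ _ ha hb => M.add_mem ha hb)
      (fun r a _ ha => M.smul_mem r ha) hxmem
    rintro x ⟨l, hdeg, rfl⟩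
    rw [Fin.sum_univ_two] at hdeg
    rw [wedge_two_s13]
    have hcase : degIdx D (l 0) = 0 ∨ degIdx D (l 0) = 1 ∨ degIdx D (l 0) = 2 := by omega
    rcases hcase with hS | hS | hS
    · -- deg S = 0, deg T = 2
      obtain ⟨i, T', hT', hTe⟩ := deg_step D 1 hD (l 1) (by omega)
      obtain ⟨j, T'', hT'', hTe2⟩ := deg_step D 0 hD T' hT'
      rw [hTe, hTe2, deg_zero D T'' hT'', deg_zero D (l 0) hS, zero_add,
        add_comm (Pi.single j 1)]
      exact hy i j
    · -- deg S = 1, deg T = 1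
      obtain ⟨i, S', hS', hSe⟩ := deg_step D 0 hD (l 0) hS
      obtain ⟨j, T', hT', hTe⟩ := deg_step D 0 hD (l 1) (by omega)
      rw [hSe, hTe, deg_zero D S' hS', deg_zero D T' hT', zero_add, zero_add]
      exact hx i j
    · -- deg S = 2, deg T = 0
      obtain ⟨i, S', hS', hSe⟩ := deg_step D 1 hD (l 0) hS
      obtain ⟨j, S'', hS'', hSe2⟩ := deg_step D 0 hD S' hS'
      rw [hSe, hSe2, deg_zero D S'' hS'', deg_zero D (l 1) (by omega), zero_add,
        add_comm (Pi.single j 1), theta_swap]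
      exact M.neg_mem (hy i j)
  · intro a b ha hb
    refine ⟨(2:ℝ)⁻¹ • (a + b), ?_, ?_⟩ <;>
    · ext i j
      have h1 := congrFun (congrFun ha i) j
      have h2 := congrFun (congrFun hb i) j
      simp only [Matrix.transpose_apply, Matrix.sub_apply, Matrix.add_apply, Matrix.neg_apply,
        Matrix.smul_apply, smul_eq_mul] at *
      linarith
end

section
/- Let A be a commutative differential algebra with D commuting derivations ∂_1, ..., ∂_D (e.g. the algebra of differential polynomials in D independent variables). Then for any local functional F = ∫ f arising from f ∈ A, the variational derivative δF/δu^α := Σ_S (−1)^{|S|} ∂^S (∂f/∂u^{α,S}) annihilates total derivatives: (δ/δu^α) ∘ ∂_{x^i} = 0 for each i = 1, ..., D. Consequently δF/δu^α is independent of the choice of density f modulo Σ_i ∂_{x^i} A. -/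
noncomputable section

/-- Jet variables `u^{α,S}` for `N` dependent and `D` independent variables. -/
abbrev JetVar (N D : ℕ) : Type := Fin N × (Fin D → ℕ)

/-- The algebra of differential polynomials. -/
abbrev DiffPoly (N D : ℕ) : Type := MvPolynomial (JetVar N D) ℝ

/-- The total derivative `∂_{x^i} = ∑_{α,S} u^{α,S+ξ_i} ∂/∂u^{α,S}`: the unique
derivation with `∂_{x^i} u^{α,S} = u^{α,S+ξ_i}`. -/
def totalD (N D : ℕ) (i : Fin D) : Derivation ℝ (DiffPoly N D) (DiffPoly N D) :=
  MvPolynomial.mkDerivation ℝ (fun v : JetVar N D => MvPolynomial.X (v.1, v.2 + Pi.single i 1))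

/-- The iterated total derivative `∂^S = ∂_{x^1}^{s_1} ⋯ ∂_{x^D}^{s_D}`. -/
def totalDpow (N D : ℕ) (S : Fin D → ℕ) (f : DiffPoly N D) : DiffPoly N D :=
  (List.finRange D).foldr (fun i g => (fun a => totalD N D i a)^[S i] g) f

/-- The variational derivative `δf/δu^α = ∑_S (−1)^{|S|} ∂^S (∂f/∂u^{α,S})` (the
sum is finite: only the jet variables occurring in `f` contribute). -/
def varDer (N D : ℕ) (α : Fin N) (f : DiffPoly N D) : DiffPoly N D :=
  ∑ S ∈ f.vars.image Prod.snd,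
    ((-1 : ℝ) ^ (∑ j, S j)) • totalDpow N D S (MvPolynomial.pderiv (α, S) f)

/-
By additivity of `δ/δu^α` it suffices to show `δ(∂_i f)/δu^α = 0`. The commutation relation
`∂/∂u^{α,S} ∘ ∂_i = ∂_i ∘ ∂/∂u^{α,S} + [s_i > 0] ∂/∂u^{α,S-ξ_i}` splits the `S`-th term of
`δ(∂_i f)/δu^α` as `a_S - [s_i > 0] a_{S-ξ_i}` with `a_S = (-1)^{|S|} ∂^{S+ξ_i} (∂f/∂u^{α,S})`,
the sign flipping because `|S| = |S - ξ_i| + 1`; the sum over `S` therefore telescopes to zero.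
-/

open MvPolynomial

section ShiftedIndices

variable {ι : Type*} [DecidableEq ι]

theorem Pi.add_single_eq_iff {S T : ι → ℕ} {i : ι} :
    T + Pi.single i 1 = S ↔ 0 < S i ∧ T = S - Pi.single i 1 := by
  constructor
  · rintro rfl
    simp
  · rintro ⟨hS, rfl⟩
    funext j
    by_cases hj : j = i
    · subst hj; simp; omega
    · simp [hj]

theorem Fintype.sum_add_single [Fintype ι] (T : ι → ℕ) (i : ι) :
    ∑ j, (T + Pi.single i 1 : ι → ℕ) j = ∑ j, T j + 1 := by
  simp [Finset.sum_add_distrib]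

theorem support_ite_tsub_single_subset {M : Type*} [Zero M] (g : (ι → ℕ) → M) (i : ι) :
    Function.support (fun S : ι → ℕ => if 0 < S i then g (S - Pi.single i 1) else 0) ⊆
      (· + Pi.single i 1) '' Function.support g := by
  intro S hS
  have hpos : 0 < S i := by by_contra h; simp [h] at hS
  exact ⟨S - Pi.single i 1, by simpa [hpos] using hS, Pi.add_single_eq_iff.mpr ⟨hpos, rfl⟩⟩

theorem finsum_ite_tsub_single {M : Type*} [AddCommMonoid M] (g : (ι → ℕ) → M) (i : ι) :
    ∑ᶠ S : ι → ℕ, (if 0 < S i then g (S - Pi.single i 1) else 0) = ∑ᶠ S, g S := by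
  have hsupp := (support_ite_tsub_single_subset g i).trans (Set.image_subset_range _ _)
  rw [← Set.indicator_eq_self.mpr hsupp, ← finsum_mem_def, finsum_mem_range (add_left_injective _)]
  simp

theorem finsum_sub_ite_tsub_single {G : Type*} [AddCommGroup G] {g : (ι → ℕ) → G}
    (hg : g.HasFiniteSupport) (i : ι) :
    ∑ᶠ S : ι → ℕ, (g S - if 0 < S i then g (S - Pi.single i 1) else 0) = 0 := by
  rw [finsum_sub_distrib hg ((hg.image _).subset (support_ite_tsub_single_subset g i)),
    finsum_ite_tsub_single, sub_self]

end ShiftedIndices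

theorem List.prod_map_pow_add_single {ι M : Type*} [DecidableEq ι] [Monoid M] {a : ι → M}
    (ha : ∀ j k, Commute (a j) (a k)) (L : List ι) (S : ι → ℕ) (i : ι) :
    (L.map fun j => a j ^ (S + Pi.single i 1 : ι → ℕ) j).prod =
      a i ^ L.count i * (L.map fun j => a j ^ S j).prod := by
  induction L with
  | nil => simp
  | cons j L ih =>
    simp only [List.map_cons, List.prod_cons, ih, ← mul_assoc]
    by_cases hj : j = i
    · subst hj
      rw [List.count_cons_self, Pi.add_apply, Pi.single_eq_same, ← pow_add, ← pow_add]
      congr 2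
      omega
    · rw [List.count_cons_of_ne hj, Pi.add_apply, Pi.single_eq_of_ne hj, add_zero,
        ((ha j i).pow_pow _ _).eq]

namespace DiffPoly

variable {N D : ℕ}

theorem totalD_X (i : Fin D) (v : JetVar N D) :
    totalD N D i (X v) = X (v.1, v.2 + Pi.single i 1) :=
  mkDerivation_X _ _ _

theorem commute_totalD (i j : Fin D) :
    Commute (totalD N D i : Module.End ℝ (DiffPoly N D)) (totalD N D j) := by
  rw [commute_iff_lie_eq, ← Derivation.commutator_coe_linear_map]
  suffices ⁅totalD N D i, totalD N D j⁆ = 0 by rw [this]; rfl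
  refine derivation_ext fun v => ?_
  simp [Derivation.commutator_apply, totalD_X, add_right_comm]

theorem totalDpow_eq_prod (S : Fin D → ℕ) :
    totalDpow N D S =
      ⇑((List.finRange D).map fun i =>
        (totalD N D i : Module.End ℝ (DiffPoly N D)) ^ S i).prod := by
  funext f
  unfold totalDpow
  induction List.finRange D with
  | nil => rfl
  | cons j L ih => simp [ih, Module.End.pow_apply]

theorem totalDpow_add_single (S : Fin D → ℕ) (i : Fin D) (f : DiffPoly N D) :
    totalDpow N D (S + Pi.single i 1) f = totalD N D i (totalDpow N D S f) := by
  rw [totalDpow_eq_prod, totalDpow_eq_prod, List.prod_map_pow_add_single commute_totalD,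
    List.count_eq_one_of_mem (List.nodup_finRange D) (List.mem_finRange i), pow_one]
  rfl

theorem totalDpow_totalD (S : Fin D → ℕ) (i : Fin D) (f : DiffPoly N D) :
    totalDpow N D S (totalD N D i f) = totalD N D i (totalDpow N D S f) := by
  rw [totalDpow_eq_prod]
  refine LinearMap.congr_fun (Commute.list_prod_left (M := Module.End ℝ (DiffPoly N D)) _ _ ?_).eq f
  simpa using fun j => (commute_totalD j i).pow_left (S j)

theorem totalDpow_add (S : Fin D → ℕ) (f g : DiffPoly N D) :
    totalDpow N D S (f + g) = totalDpow N D S f + totalDpow N D S g := by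
  rw [totalDpow_eq_prod, map_add]

theorem totalDpow_zero (S : Fin D → ℕ) : totalDpow N D S 0 = 0 := by
  rw [totalDpow_eq_prod, map_zero]

theorem commutator_pderiv_totalD (α : Fin N) (S : Fin D → ℕ) (i : Fin D) :
    ⁅(pderiv (α, S) : Derivation ℝ (DiffPoly N D) (DiffPoly N D)), totalD N D i⁆ =
      if 0 < S i then pderiv (α, S - Pi.single i 1) else 0 := by
  refine derivation_ext fun ⟨β, T⟩ => ?_
  rw [Derivation.commutator_apply, totalD_X, pderiv_X, pderiv_X]
  simp only [Pi.single_apply, Prod.mk.injEq, Pi.add_single_eq_iff, apply_ite (totalD N D i),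
    Derivation.map_one_eq_zero, map_zero, ite_self, sub_zero]
  split_ifs <;> simp_all [pderiv_X]

theorem pderiv_totalD (α : Fin N) (S : Fin D → ℕ) (i : Fin D) (f : DiffPoly N D) :
    pderiv (α, S) (totalD N D i f) =
      totalD N D i (pderiv (α, S) f) + if 0 < S i then pderiv (α, S - Pi.single i 1) f else 0 := by
  rw [← sub_eq_iff_eq_add', ← Derivation.commutator_apply, commutator_pderiv_totalD]
  split_ifs <;> rfl

theorem support_pderiv_subset (α : Fin N) (f : DiffPoly N D)
    {M : Type*} [Zero M] (g : (Fin D → ℕ) → DiffPoly N D → M) (hg : ∀ S, g S 0 = 0) :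
    Function.support (fun S => g S (pderiv (α, S) f)) ⊆ ↑(f.vars.image Prod.snd) := by
  intro S hS
  by_contra hS'
  refine hS ?_
  simp only
  rw [pderiv_eq_zero_of_notMem_vars fun hv => hS' (Finset.mem_image_of_mem Prod.snd hv), hg]

theorem hasFiniteSupport_pderiv (α : Fin N) (f : DiffPoly N D)
    {M : Type*} [Zero M] (g : (Fin D → ℕ) → DiffPoly N D → M) (hg : ∀ S, g S 0 = 0) :
    (fun S => g S (pderiv (α, S) f)).HasFiniteSupport :=
  (Finset.finite_toSet _).subset (support_pderiv_subset α f g hg)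

theorem varDer_eq_finsum (α : Fin N) (f : DiffPoly N D) :
    varDer N D α f = ∑ᶠ S, ((-1 : ℝ) ^ (∑ j, S j)) • totalDpow N D S (pderiv (α, S) f) :=
  (finsum_eq_sum_of_support_subset _
    (support_pderiv_subset α f (fun S p => ((-1 : ℝ) ^ (∑ j, S j)) • totalDpow N D S p)
      fun S => by rw [totalDpow_zero, smul_zero])).symm

theorem varDer_add (α : Fin N) (f g : DiffPoly N D) :
    varDer N D α (f + g) = varDer N D α f + varDer N D α g := by
  have hfin (p : DiffPoly N D) :=
    hasFiniteSupport_pderiv α p (fun S q => ((-1 : ℝ) ^ (∑ j, S j)) • totalDpow N D S q)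
      fun S => by rw [totalDpow_zero, smul_zero]
  simp only [varDer_eq_finsum, map_add, totalDpow_add, smul_add]
  exact finsum_add_distrib (hfin f) (hfin g)

theorem smul_totalDpow_pderiv_totalD (α : Fin N) (i : Fin D) (f : DiffPoly N D)
    (S : Fin D → ℕ) :
    ((-1 : ℝ) ^ (∑ j, S j)) • totalDpow N D S (pderiv (α, S) (totalD N D i f)) =
      ((-1 : ℝ) ^ (∑ j, S j)) • totalDpow N D (S + Pi.single i 1) (pderiv (α, S) f) -
        if 0 < S i then
          ((-1 : ℝ) ^ (∑ j, (S - Pi.single i 1 : Fin D → ℕ) j)) •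
            totalDpow N D (S - Pi.single i 1 + Pi.single i 1) (pderiv (α, S - Pi.single i 1) f)
        else 0 := by
  rw [pderiv_totalD, totalDpow_add, smul_add, totalDpow_totalD, ← totalDpow_add_single,
    sub_eq_add_neg]
  congr 1
  split_ifs with hS
  · obtain ⟨T, rfl⟩ : ∃ T : Fin D → ℕ, T + Pi.single i 1 = S :=
      ⟨_, Pi.add_single_eq_iff.mpr ⟨hS, rfl⟩⟩
    rw [add_tsub_cancel_right, Fintype.sum_add_single, pow_succ, mul_neg_one, neg_smul,
      totalDpow_add_single]
  · rw [totalDpow_zero, smul_zero, neg_zero]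

theorem varDer_totalD (α : Fin N) (i : Fin D) (f : DiffPoly N D) :
    varDer N D α (totalD N D i f) = 0 := by
  have hfin := hasFiniteSupport_pderiv α f
    (fun S p => ((-1 : ℝ) ^ (∑ j, S j)) • totalDpow N D (S + Pi.single i 1) p)
    fun S => by rw [totalDpow_zero, smul_zero]
  rw [varDer_eq_finsum, finsum_congr (smul_totalDpow_pderiv_totalD α i f)]
  exact finsum_sub_ite_tsub_single hfin i

theorem varDer_sum {ι : Type*} (α : Fin N) (s : Finset ι) (g : ι → DiffPoly N D) :
    varDer N D α (∑ k ∈ s, g k) = ∑ k ∈ s, varDer N D α (g k) :=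
  map_sum (AddMonoidHom.mk' (varDer N D α) (varDer_add α)) g s

end DiffPoly

/-- the variational derivative annihilates total derivatives,
`(δ/δu^α) ∘ ∂_{x^i} = 0`; consequently `δF/δu^α` is independent of the choice of the
density modulo `∑_i ∂_{x^i} A`. -/
theorem stmt16 (N D : ℕ) :
    (∀ (α : Fin N) (i : Fin D) (f : DiffPoly N D), varDer N D α (totalD N D i f) = 0) ∧
    (∀ (α : Fin N) (f : DiffPoly N D) (h : Fin D → DiffPoly N D),
      varDer N D α (f + ∑ i, totalD N D i (h i)) = varDer N D α f) := by
  refine ⟨DiffPoly.varDer_totalD, fun α f h => ?_⟩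
  rw [DiffPoly.varDer_add, DiffPoly.varDer_sum,
    Finset.sum_eq_zero fun i _ => DiffPoly.varDer_totalD α i (h i), add_zero]

end
end
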